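/- arXiv:1905.10812 — 4 statements merged into one kernel-verified Lean document; each statement's English description precedes it below -/
import Mathlib

section
/- If f : ℝ^d → ℝ is differentiable, 1-strongly convex and 1-smooth, then ∇f is a translation: there exists c ∈ ℝ^d such that ∇f(x) = x + c for all x. -/
open InnerProductSpace

local notation "⟪" x ", " y "⟫" => @inner ℝ _ _ x y

theorem stmt_1 {d : ℕ} (f : EuclideanSpace ℝ (Fin d) → ℝ)
    (f' : EuclideanSpace ℝ (Fin d) → EuclideanSpace ℝ (Fin d))
    (hdiff : ∀ x, HasGradientAt f (f' x) x)
    (hsc : ConvexOn ℝ Set.univ (fun x => f x - 1 / 2 * ‖x‖ ^ 2))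
    (hsmooth : ∀ x y, ‖f' x - f' y‖ ≤ 1 * ‖x - y‖) :
    ∃ c : EuclideanSpace ℝ (Fin d), ∀ x, f' x = x + c := by
  have key : ∀ x y : EuclideanSpace ℝ (Fin d), f' y - f' x = y - x := by
    intro x y
    rcases eq_or_ne x y with rfl | hxy
    · simp
    -- the line through x and y
    set z : ℝ → EuclideanSpace ℝ (Fin d) := fun t => t • (y - x) + x with hzdef
    have hz : ∀ t : ℝ, HasDerivAt z (y - x) t := by
      intro t
      simpa [hzdef] using ((hasDerivAt_id t).smul_const (y - x)).add_const x
    -- h = (f - ½‖·‖²) ∘ z is convex on ℝ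
    have hconv : ConvexOn ℝ Set.univ fun t : ℝ => f (z t) - 1 / 2 * ‖z t‖ ^ 2 := by
      have := hsc.comp_affineMap (AffineMap.lineMap x y)
      have heq : ∀ t : ℝ, AffineMap.lineMap x y t = z t := by
        intro t; simp [AffineMap.lineMap_apply, hzdef]
      have hpre : (AffineMap.lineMap x y : ℝ →ᵃ[ℝ] EuclideanSpace ℝ (Fin d)) ⁻¹' Set.univ
          = (Set.univ : Set ℝ) := by simp
      rw [hpre] at this
      have hfeq : ((fun x => f x - 1 / 2 * ‖x‖ ^ 2) ∘ (AffineMap.lineMap x y))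
          = fun t : ℝ => f (z t) - 1 / 2 * ‖z t‖ ^ 2 := by
        funext t; simp [Function.comp, heq t]
      rwa [hfeq] at this
    -- derivative of h at t
    have hderiv : ∀ t : ℝ, HasDerivAt (fun t : ℝ => f (z t) - 1 / 2 * ‖z t‖ ^ 2)
        (⟪f' (z t), y - x⟫ - ⟪z t, y - x⟫) t := by
      intro t
      have h1 : HasDerivAt (fun t : ℝ => f (z t)) (⟪f' (z t), y - x⟫) t := by
        have := (hasGradientAt_iff_hasFDerivAt.mp (hdiff (z t))).comp_hasDerivAt t (hz t)
        simp [InnerProductSpace.toDual_apply_apply] at this; exact this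
      have h2 : HasDerivAt (fun t : ℝ => ‖z t‖ ^ 2) (2 * ⟪z t, y - x⟫) t := by
        have := (hz t).inner ℝ (hz t)
        have heq : (fun t : ℝ => ⟪z t, z t⟫) = fun t : ℝ => ‖z t‖ ^ 2 := by
          funext s; exact real_inner_self_eq_norm_sq (z s)
        rw [heq] at this
        exact this.congr_deriv (by rw [real_inner_comm (y - x) (z t)]; ring)
      have := h1.sub ((h2.const_mul (1 / 2 : ℝ)))
      exact this.congr_deriv (by ring)
    -- monotonicity of the derivative of a convex function: ψ 0 ≤ ψ 1
    have hmono : ⟪f' (z 0), y - x⟫ - ⟪z 0, y - x⟫ ≤ ⟪f' (z 1), y - x⟫ - ⟪z 1, y - x⟫ := by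
      have h01 : (0 : ℝ) < 1 := one_pos
      have hle1 := hconv.le_slope_of_hasDerivAt (Set.mem_univ (0 : ℝ)) (Set.mem_univ (1 : ℝ))
        h01 (hderiv 0)
      have hle2 := hconv.slope_le_of_hasDerivAt (Set.mem_univ (0 : ℝ)) (Set.mem_univ (1 : ℝ))
        h01 (hderiv 1)
      exact hle1.trans hle2
    have hz0 : z 0 = x := by simp [hzdef]
    have hz1 : z 1 = y := by simp [hzdef]
    rw [hz0, hz1] at hmono
    -- so ⟪f' y - f' x, y - x⟫ ≥ ‖y - x‖²
    have hsc' : ‖y - x‖ ^ 2 ≤ ⟪f' y - f' x, y - x⟫ := by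
      have : ⟪y - x, y - x⟫ ≤ ⟪f' y - f' x, y - x⟫ := by
        rw [inner_sub_left, inner_sub_left]; linarith
      rwa [real_inner_self_eq_norm_sq] at this
    have hnorm : ‖f' y - f' x‖ ≤ ‖y - x‖ := by
      have := hsmooth y x; linarith
    -- conclude f' y - f' x = y - x
    have hzero : ‖(f' y - f' x) - (y - x)‖ ^ 2 ≤ 0 := by
      rw [norm_sub_sq_real]
      have h1 : ‖f' y - f' x‖ ^ 2 ≤ ‖y - x‖ ^ 2 := by
        have := norm_nonneg (f' y - f' x)
        nlinarith
      linarith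
    have := sq_nonneg ‖(f' y - f' x) - (y - x)‖
    have hn : ‖(f' y - f' x) - (y - x)‖ = 0 := by
      have h2 : ‖(f' y - f' x) - (y - x)‖ ^ 2 = 0 := le_antisymm hzero this
      exact pow_eq_zero_iff (by norm_num) |>.mp h2
    have := norm_eq_zero.mp hn
    exact sub_eq_zero.mp this
  refine ⟨f' 0, fun x => ?_⟩
  have := key 0 x
  simp at this
  rw [sub_eq_iff_eq_add] at this
  rw [this]
end

section
/- (1D interpolation) Given real points x₁ < x₂ < … < x_n and values z₁, …, z_n, there exists a convex differentiable function f : ℝ → ℝ with 0 ≤ ℓ ≤ f'' ≤ L (in the sense that f' is L-Lipschitz and f − (ℓ/2)x² convex) and f'(xᵢ) = zᵢ for all i, if and only if ℓ(x_{i+1} − xᵢ) ≤ z_{i+1} − zᵢ ≤ L(x_{i+1} − xᵢ) for all i. -/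
private lemma max_min_split (a : ℝ) : max a 0 + min a 0 = a := by
  rcases le_total a 0 with h | h
  · simp [max_eq_right h, min_eq_left h]
  · simp [max_eq_left h, min_eq_right h]

/-- Key construction: integrate a function `φ` satisfying two-sided slope bounds. -/
private lemma build_f (ℓ L : ℝ) (hℓ : 0 ≤ ℓ) (hℓL : ℓ ≤ L) (φ : ℝ → ℝ)
    (hbound : ∀ s t : ℝ, t ≤ s → ℓ * (s - t) ≤ φ s - φ t ∧ φ s - φ t ≤ L * (s - t)) :
    ∃ f : ℝ → ℝ, ConvexOn ℝ Set.univ f ∧ Differentiable ℝ f ∧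
      ConvexOn ℝ Set.univ (fun t => f t - ℓ / 2 * t ^ 2) ∧
      (∀ s t : ℝ, |deriv f s - deriv f t| ≤ L * |s - t|) ∧
      (∀ t, deriv f t = φ t) := by
  have hL0 : 0 ≤ L := hℓ.trans hℓL
  have hlip : ∀ s t : ℝ, |φ s - φ t| ≤ L * |s - t| := by
    intro s t
    rcases le_total t s with h | h
    · obtain ⟨h1, h2⟩ := hbound s t h
      rw [abs_of_nonneg (sub_nonneg.2 h), abs_le]
      constructor <;> nlinarith
    · obtain ⟨h1, h2⟩ := hbound t s h
      rw [abs_of_nonpos (sub_nonpos.2 h), abs_le]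
      constructor
      · nlinarith [abs_nonneg (φ s - φ t)]
      · nlinarith [neg_le_abs (φ s - φ t), le_abs_self (φ s - φ t)]
  have hcont : Continuous φ := by
    have : LipschitzWith ⟨L, hL0⟩ φ := by
      apply LipschitzWith.of_dist_le_mul
      intro s t
      rw [Real.dist_eq, Real.dist_eq]; exact hlip s t
    exact this.continuous
  set f : ℝ → ℝ := fun t => ∫ s in (0:ℝ)..t, φ s with hf
  have hD : ∀ t : ℝ, HasDerivAt f (φ t) t := fun t =>
    (hcont.integral_hasStrictDerivAt 0 t).hasDerivAt
  have hdiff : Differentiable ℝ f := fun t => (hD t).differentiableAt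
  have hderiv : ∀ t, deriv f t = φ t := fun t => (hD t).deriv
  have hmono : Monotone φ := by
    intro a b hab
    have := (hbound b a hab).1
    nlinarith
  refine ⟨f, ?_, hdiff, ?_, ?_, hderiv⟩
  · apply Monotone.convexOn_univ_of_deriv hdiff
    intro a b hab
    rw [hderiv, hderiv]
    exact hmono hab
  · have hq : ∀ t : ℝ, HasDerivAt (fun t : ℝ => ℓ / 2 * t ^ 2) (ℓ * t) t := by
      intro t
      have h : HasDerivAt (fun t : ℝ => ℓ / 2 * t ^ 2) (ℓ / 2 * ((2:ℕ) * t ^ (2 - 1))) t :=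
        (hasDerivAt_pow 2 t).const_mul (ℓ / 2)
      convert h using 1
      push_cast
      ring
    have hDg : ∀ t : ℝ, HasDerivAt (fun t => f t - ℓ / 2 * t ^ 2) (φ t - ℓ * t) t :=
      fun t => (hD t).sub (hq t)
    apply Monotone.convexOn_univ_of_deriv (fun t => (hDg t).differentiableAt)
    intro a b hab
    rw [(hDg a).deriv, (hDg b).deriv]
    have := (hbound b a hab).1
    nlinarith
  · intro s t
    rw [hderiv, hderiv]
    exact hlip s t

theorem stmt_9 (n : ℕ) (x z : Fin n → ℝ) (hx : StrictMono x)
    (ℓ L : ℝ) (hℓ : 0 ≤ ℓ) (hℓL : ℓ ≤ L) :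
    (∃ f : ℝ → ℝ, ConvexOn ℝ Set.univ f ∧ Differentiable ℝ f ∧
        ConvexOn ℝ Set.univ (fun t => f t - ℓ / 2 * t ^ 2) ∧
        (∀ s t : ℝ, |deriv f s - deriv f t| ≤ L * |s - t|) ∧
        (∀ i, deriv f (x i) = z i))
      ↔ (∀ i j : Fin n, (j : ℕ) = (i : ℕ) + 1 →
          ℓ * (x j - x i) ≤ z j - z i ∧ z j - z i ≤ L * (x j - x i)) := by
  constructor
  · rintro ⟨f, hconv, hdiff, hconv2, hlip, hinterp⟩ i j hij
    have hij' : i < j := by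
      rw [Fin.lt_def]; omega
    have hxij : x i < x j := hx hij'
    constructor
    · -- lower bound from convexity of f - ℓ/2 t^2
      have hq : ∀ t : ℝ, HasDerivAt (fun t : ℝ => ℓ / 2 * t ^ 2) (ℓ * t) t := by
        intro t
        have h : HasDerivAt (fun t : ℝ => ℓ / 2 * t ^ 2) (ℓ / 2 * ((2:ℕ) * t ^ (2 - 1))) t :=
        (hasDerivAt_pow 2 t).const_mul (ℓ / 2)
        convert h using 1
        push_cast
        ring
      have hDg : ∀ t : ℝ, HasDerivAt (fun t => f t - ℓ / 2 * t ^ 2) (deriv f t - ℓ * t) t :=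
        fun t => ((hdiff t).hasDerivAt).sub (hq t)
      have hmono := hconv2.monotoneOn_deriv (fun t _ => (hDg t).differentiableAt)
      have h2 := hmono (Set.mem_univ (x i)) (Set.mem_univ (x j)) hxij.le
      rw [(hDg (x i)).deriv, (hDg (x j)).deriv, hinterp i, hinterp j] at h2
      linarith
    · have h := hlip (x j) (x i)
      rw [hinterp j, hinterp i, abs_of_pos (sub_pos.2 hxij)] at h
      exact (le_abs_self _).trans h
  · intro hcond
    rcases Nat.eq_zero_or_pos n with hn | hn
    · subst hn
      obtain ⟨f, h1, h2, h3, h4, _⟩ := build_f ℓ L hℓ hℓL (fun t => ℓ * t)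
        (by intro s t h; constructor <;> nlinarith)
      exact ⟨f, h1, h2, h3, h4, fun i => i.elim0⟩
    · haveI : Nonempty (Fin n) := Fin.pos_iff_nonempty.1 hn
      set g : Fin n → ℝ → ℝ :=
        fun i t => z i + ℓ * max (t - x i) 0 + L * min (t - x i) 0 with hg
      set φ : ℝ → ℝ := fun t => Finset.univ.sup' Finset.univ_nonempty (fun i => g i t) with hφ
      have hgb : ∀ (i : Fin n) (s t : ℝ), t ≤ s →
          ℓ * (s - t) ≤ g i s - g i t ∧ g i s - g i t ≤ L * (s - t) := by
        intro i s t h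
        have hA : max (t - x i) 0 ≤ max (s - x i) 0 :=
          max_le_max (by linarith) le_rfl
        have hB : min (t - x i) 0 ≤ min (s - x i) 0 :=
          min_le_min (by linarith) le_rfl
        have hAB : (max (s - x i) 0 - max (t - x i) 0) +
            (min (s - x i) 0 - min (t - x i) 0) = s - t := by
          have h1 := max_min_split (s - x i)
          have h2 := max_min_split (t - x i)
          linarith
        have hgd : g i s - g i t = ℓ * (max (s - x i) 0 - max (t - x i) 0)
            + L * (min (s - x i) 0 - min (t - x i) 0) := by
          simp only [hg]; ring
        constructor <;> nlinarith
      have hφb : ∀ s t : ℝ, t ≤ s → ℓ * (s - t) ≤ φ s - φ t ∧ φ s - φ t ≤ L * (s - t) := by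
        intro s t h
        constructor
        · obtain ⟨i, _, hi⟩ := Finset.exists_mem_eq_sup' Finset.univ_nonempty (fun i => g i t)
          have h1 : g i t + ℓ * (s - t) ≤ g i s := by have := (hgb i s t h).1; linarith
          have h2 : g i s ≤ φ s := Finset.le_sup' (fun i => g i s) (Finset.mem_univ i)
          rw [hφ]; rw [← hi] at *
          dsimp only at *
          linarith
        · have h1 : φ s ≤ φ t + L * (s - t) := by
            apply Finset.sup'_le
            intro i _
            have h2 : g i t ≤ φ t := Finset.le_sup' (fun i => g i t) (Finset.mem_univ i)
            have := (hgb i s t h).2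
            linarith
          linarith
      -- telescoped chain inequalities
      have hchain : ∀ (k : ℕ) (i j : Fin n), (j : ℕ) = (i : ℕ) + k →
          ℓ * (x j - x i) ≤ z j - z i ∧ z j - z i ≤ L * (x j - x i) := by
        intro k
        induction k with
        | zero =>
          intro i j hji
          have : j = i := Fin.ext (by omega)
          subst this
          simp
        | succ k ih =>
          intro i j hji
          have hm : (i : ℕ) + k < n := by have := j.isLt; omega
          set m : Fin n := ⟨(i : ℕ) + k, hm⟩ with hmdef
          obtain ⟨h1, h2⟩ := ih i m rfl
          obtain ⟨h3, h4⟩ := hcond m j (by simp [hmdef]; omega)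
          constructor
          · have he : ℓ * (x j - x i) = ℓ * (x j - x m) + ℓ * (x m - x i) := by ring
            linarith
          · have he : L * (x j - x i) = L * (x j - x m) + L * (x m - x i) := by ring
            linarith
      have hchain' : ∀ i j : Fin n, i ≤ j →
          ℓ * (x j - x i) ≤ z j - z i ∧ z j - z i ≤ L * (x j - x i) := by
        intro i j hij
        exact hchain ((j : ℕ) - (i : ℕ)) i j (by omega)
      have hinterp : ∀ j : Fin n, φ (x j) = z j := by
        intro j
        apply le_antisymm
        · apply Finset.sup'_le
          intro i _
          rcases le_total i j with h | h
          · have hxx : x i ≤ x j := hx.monotone h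
            have h1 := (hchain' i j h).1
            simp only [hg, max_eq_left (sub_nonneg.2 hxx), min_eq_right (sub_nonneg.2 hxx)]
            linarith
          · have hxx : x j ≤ x i := hx.monotone h
            have h1 := (hchain' j i h).2
            simp only [hg, max_eq_right (sub_nonpos.2 hxx), min_eq_left (sub_nonpos.2 hxx)]
            linarith
        · have h2 : g j (x j) ≤ φ (x j) := Finset.le_sup' (fun i => g i (x j)) (Finset.mem_univ j)
          simpa [hg] using h2
      obtain ⟨f, h1, h2, h3, h4, h5⟩ := build_f ℓ L hℓ hℓL φ hφb
      exact ⟨f, h1, h2, h3, h4, fun i => by rw [h5, hinterp]⟩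
end

section
/- Let μ = Σᵢ₌₁ⁿ aᵢ δ_{xᵢ} on ℝ with x₁ ≤ … ≤ x_n, and ν a probability measure on ℝ with finite second moment. Let π be the monotone (optimal) coupling (Q_μ, Q_ν)_♯ Leb|[0,1]. Then the barycentric projection satisfies ⟨π⟩(xᵢ) = (1/aᵢ) ∫_{α_{i−1}}^{α_i} Q_ν(t) dt, where αᵢ = Σ_{k≤i} a_k and α₀ = 0. -/
open MeasureTheory

/-- The (generalized) quantile function of a measure on `ℝ`. -/
noncomputable def quantile (ρ : Measure ℝ) (t : ℝ) : ℝ :=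
  sInf {x : ℝ | t ≤ (ρ (Set.Iic x)).toReal}

open Set Filter Topology in
lemma quantile_monotoneOn (ρ : Measure ℝ) [IsProbabilityMeasure ρ] :
    MonotoneOn (quantile ρ) (Set.Ioo (0:ℝ) 1) := by
  intro s hs t ht hst
  have h0 : Tendsto (fun x : ℝ => ρ (Set.Iic x)) atBot (𝓝 0) := by
    have h := tendsto_measure_iInter_atBot (μ := ρ) (s := fun x : ℝ => Set.Iic x)
      (fun _ => measurableSet_Iic.nullMeasurableSet)
      (fun _ _ h => Set.Iic_subset_Iic.2 h) ⟨0, measure_ne_top ρ _⟩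
    have he : ⋂ x : ℝ, Set.Iic x = (∅ : Set ℝ) := by
      ext y
      simp only [Set.mem_iInter, Set.mem_Iic, Set.mem_empty_iff_false, iff_false, not_forall]
      exact ⟨y - 1, by push_neg; linarith⟩
    simpa [he, Function.comp_def] using h
  have hb : BddBelow {x : ℝ | s ≤ (ρ (Set.Iic x)).toReal} := by
    have h0' : Tendsto (fun x : ℝ => (ρ (Set.Iic x)).toReal) atBot (𝓝 0) := by
      have := (ENNReal.tendsto_toReal (by simp)).comp h0
      simpa [Function.comp_def] using this
    obtain ⟨x0, hx0⟩ := (h0'.eventually (eventually_lt_nhds hs.1)).exists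
    refine ⟨x0, fun y hy => ?_⟩
    by_contra hxy
    push_neg at hxy
    have : (ρ (Set.Iic y)).toReal ≤ (ρ (Set.Iic x0)).toReal :=
      ENNReal.toReal_mono (measure_ne_top _ _) (measure_mono (Set.Iic_subset_Iic.2 hxy.le))
    exact absurd hy (by simp only [Set.mem_setOf_eq]; push_neg; linarith)
  have hne : {x : ℝ | t ≤ (ρ (Set.Iic x)).toReal}.Nonempty := by
    have h1 : Tendsto (fun x : ℝ => (ρ (Set.Iic x)).toReal) atTop (𝓝 1) := by
      have := (ENNReal.tendsto_toReal (by simp)).comp (tendsto_measure_Iic_atTop ρ)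
      simpa [Function.comp_def] using this
    obtain ⟨x1, hx1⟩ := (h1.eventually (eventually_ge_nhds ht.2)).exists
    exact ⟨x1, hx1⟩
  exact csInf_le_csInf hb hne fun y hy => le_trans hst hy

theorem stmt_11 {n : ℕ} (a : Fin n → ℝ) (x : Fin n → ℝ)
    (ha : ∀ i, 0 < a i) (hsum : ∑ i, a i = 1) (hx : StrictMono x)
    (ν : Measure ℝ) [IsProbabilityMeasure ν] (hν2 : Integrable (fun y => y ^ 2) ν)
    (μ : Measure ℝ) (hμ : μ = ∑ i, ENNReal.ofReal (a i) • Measure.dirac (x i))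
    (π : Measure (ℝ × ℝ))
    (hπ : π = Measure.map (fun t => (quantile μ t, quantile ν t))
      (volume.restrict (Set.Icc (0 : ℝ) 1)))
    (αlo αhi : Fin n → ℝ)
    (hαlo : ∀ i, αlo i = ∑ k ∈ Finset.univ.filter (fun k => k < i), a k)
    (hαhi : ∀ i, αhi i = ∑ k ∈ Finset.univ.filter (fun k => k ≤ i), a k) :
    ∀ i, (1 / a i) * (∫ p in {q : ℝ × ℝ | q.1 = x i}, p.2 ∂π)
      = (1 / a i) * ∫ t in (αlo i)..(αhi i), quantile ν t := by
  -- CDF of μ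
  have hF : ∀ y, (μ (Set.Iic y)).toReal
      = ∑ k ∈ Finset.univ.filter (fun k => x k ≤ y), a k := by
    intro y
    rw [hμ, Finset.sum_filter]
    rw [Measure.finset_sum_apply]
    have hterm : ∀ k : Fin n, (ENNReal.ofReal (a k) • Measure.dirac (x k)) (Set.Iic y)
        = if x k ≤ y then ENNReal.ofReal (a k) else 0 := by
      intro k
      rw [Measure.smul_apply, Measure.dirac_apply' _ measurableSet_Iic]
      by_cases h : x k ≤ y
      · rw [Set.indicator_of_mem (Set.mem_Iic.2 h)]; simp [h]
      · rw [Set.indicator_of_notMem (fun hh => h (Set.mem_Iic.1 hh))]; simp [h]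
    rw [ENNReal.toReal_sum (fun k _ => by rw [hterm]; split <;> simp)]
    refine Finset.sum_congr rfl (fun k _ => ?_)
    rw [hterm]
    split <;> simp [ENNReal.toReal_ofReal (ha k).le]
  -- value of quantile μ on (αlo j, αhi j]
  have hq : ∀ j t, αlo j < t → t ≤ αhi j → quantile μ t = x j := by
    intro j t hlt hle
    have hmem : t ≤ (μ (Set.Iic (x j))).toReal := by
      rw [hF]
      have : Finset.univ.filter (fun k => x k ≤ x j)
          = Finset.univ.filter (fun k => k ≤ j) := by
        ext k; simp [hx.le_iff_le]
      rw [this, ← hαhi]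
      exact hle
    have hlb : ∀ y ∈ {y : ℝ | t ≤ (μ (Set.Iic y)).toReal}, x j ≤ y := by
      intro y hy
      by_contra hyx
      push_neg at hyx
      have hsub : Finset.univ.filter (fun k => x k ≤ y)
          ⊆ Finset.univ.filter (fun k => k < j) := by
        intro k hk
        simp only [Finset.mem_filter, Finset.mem_univ, true_and] at hk ⊢
        exact hx.lt_iff_lt.1 (lt_of_le_of_lt hk hyx)
      have : (μ (Set.Iic y)).toReal ≤ αlo j := by
        rw [hF, hαlo]
        exact Finset.sum_le_sum_of_subset_of_nonneg hsub (fun k _ _ => (ha k).le)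
      have ht' : t ≤ (μ (Set.Iic y)).toReal := hy
      linarith
    exact le_antisymm (csInf_le ⟨x j, hlb⟩ hmem) (le_csInf ⟨x j, hmem⟩ hlb)
  have hn : 0 < n := by
    rcases Nat.eq_zero_or_pos n with h | h
    · subst h; simp at hsum
    · exact h
  -- the intervals cover (0,1]
  have hcov : ∀ t ∈ Set.Ioc (0:ℝ) 1, ∃ j, αlo j < t ∧ t ≤ αhi j := by
    intro t ht
    set s := Finset.univ.filter (fun j : Fin n => t ≤ αhi j) with hs
    have hlast : (⟨n - 1, by omega⟩ : Fin n) ∈ s := by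
      simp only [hs, Finset.mem_filter, Finset.mem_univ, true_and]
      have : αhi ⟨n - 1, by omega⟩ = 1 := by
        rw [hαhi, ← hsum]
        refine Finset.sum_congr ?_ (fun _ _ => rfl)
        ext k
        simp only [Finset.mem_filter, Finset.mem_univ, true_and, iff_true]
        rw [Fin.le_def]
        simp only [Fin.val_mk]
        omega
      rw [this]; exact ht.2
    have hsne : s.Nonempty := ⟨_, hlast⟩
    set j := s.min' hsne with hj
    have hjs : j ∈ s := s.min'_mem hsne
    have hjle : t ≤ αhi j := by
      simpa only [hs, Finset.mem_filter, Finset.mem_univ, true_and] using hjs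
    refine ⟨j, ?_, hjle⟩
    by_contra hlo
    push_neg at hlo
    -- then j ≠ 0 and the predecessor also satisfies t ≤ αhi
    have hj0 : (j : ℕ) ≠ 0 := by
      intro h0
      have : αlo j = 0 := by
        rw [hαlo]
        refine Finset.sum_eq_zero (fun k hk => ?_)
        simp only [Finset.mem_filter, Finset.mem_univ, true_and, Fin.lt_def, h0] at hk
        omega
      rw [this] at hlo
      linarith [ht.1]
    set j' : Fin n := ⟨(j : ℕ) - 1, by omega⟩ with hj'
    have hhi' : αhi j' = αlo j := by
      rw [hαhi, hαlo]
      refine Finset.sum_congr ?_ (fun _ _ => rfl)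
      ext k
      simp only [Finset.mem_filter, Finset.mem_univ, true_and, Fin.le_def, Fin.lt_def, hj']
      omega
    have hj's : j' ∈ s := by
      simp only [hs, Finset.mem_filter, Finset.mem_univ, true_and]
      rw [hhi']; exact hlo
    have := s.min'_le _ hj's
    rw [← hj] at this
    have : (j : ℕ) ≤ (j : ℕ) - 1 := Fin.le_def.1 this
    omega
  intro i
  congr 1
  -- basic facts about the interval
  have hαlo_nonneg : 0 ≤ αlo i := by
    rw [hαlo]; exact Finset.sum_nonneg fun k _ => (ha k).le
  have hαhi_le_one : αhi i ≤ 1 := by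
    rw [hαhi, ← hsum]
    exact Finset.sum_le_sum_of_subset_of_nonneg (Finset.filter_subset _ _)
      (fun k _ _ => (ha k).le)
  have hlohi : αlo i < αhi i := by
    have hins : Finset.univ.filter (fun k => k ≤ i)
        = insert i (Finset.univ.filter (fun k => k < i)) := by
      ext k
      simp only [Finset.mem_filter, Finset.mem_univ, true_and, Finset.mem_insert]
      constructor
      · intro h; rcases eq_or_lt_of_le h with h | h
        · exact Or.inl h
        · exact Or.inr (by simpa using h)
      · rintro (rfl | h)
        · exact le_refl _
        · exact (by simpa using h : k < i).le
    have : αhi i = a i + αlo i := by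
      rw [hαhi, hαlo, hins, Finset.sum_insert (by simp)]
    rw [this]; linarith [ha i]
  have hIocsub : Set.Ioc (αlo i) (αhi i) ⊆ Set.Ioc (0:ℝ) 1 :=
    Set.Ioc_subset_Ioc hαlo_nonneg hαhi_le_one
  -- characterization of the fiber on (0,1]
  have hd : ∀ t ∈ Set.Ioc (0:ℝ) 1,
      (quantile μ t = x i ↔ t ∈ Set.Ioc (αlo i) (αhi i)) := by
    intro t ht
    constructor
    · intro h
      obtain ⟨j, hj1, hj2⟩ := hcov t ht
      have := hq j t hj1 hj2
      have hji : j = i := hx.injective (by rw [← this, h])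
      subst hji
      exact ⟨hj1, hj2⟩
    · intro h
      exact hq i t h.1 h.2
  -- measurability of the map
  have hrIcc : volume.restrict (Set.Icc (0:ℝ) 1) = volume.restrict (Set.Ioo (0:ℝ) 1) :=
    (Measure.restrict_congr_set Ioo_ae_eq_Icc).symm
  have hgμ : AEMeasurable (quantile μ) (volume.restrict (Set.Icc (0:ℝ) 1)) := by
    rw [hrIcc]
    have : IsProbabilityMeasure μ := by
      constructor
      rw [hμ]
      simp only [Measure.coe_finset_sum, Measure.smul_apply, Finset.sum_apply,
        Measure.dirac_apply_of_mem (Set.mem_univ _), smul_eq_mul, mul_one]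
      rw [← ENNReal.ofReal_sum_of_nonneg (fun k _ => (ha k).le), hsum]
      simp
    exact aemeasurable_restrict_of_monotoneOn measurableSet_Ioo (quantile_monotoneOn μ)
  have hgν : AEMeasurable (quantile ν) (volume.restrict (Set.Icc (0:ℝ) 1)) := by
    rw [hrIcc]
    exact aemeasurable_restrict_of_monotoneOn measurableSet_Ioo (quantile_monotoneOn ν)
  have hg : AEMeasurable (fun t => (quantile μ t, quantile ν t))
      (volume.restrict (Set.Icc (0:ℝ) 1)) := hgμ.prodMk hgν
  have hS : MeasurableSet {q : ℝ × ℝ | q.1 = x i} :=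
    (measurableSet_singleton (x i)).preimage measurable_fst
  rw [hπ, setIntegral_map hS measurable_snd.aestronglyMeasurable hg]
  have hpre : (fun t => (quantile μ t, quantile ν t)) ⁻¹' {q : ℝ × ℝ | q.1 = x i}
      = {t : ℝ | quantile μ t = x i} := rfl
  rw [hpre]
  -- a.e. equality of sets
  have hae : {t : ℝ | quantile μ t = x i}
      =ᵐ[volume.restrict (Set.Icc (0:ℝ) 1)] Set.Ioc (αlo i) (αhi i) := by
    rw [Filter.eventuallyEq_set]
    rw [ae_restrict_iff' measurableSet_Icc]
    have h0 : ∀ᵐ t : ℝ ∂volume, t ≠ 0 := by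
      rw [Filter.eventually_iff]
      have : {t : ℝ | t ≠ 0}ᶜ = {(0:ℝ)} := by ext t; simp
      rw [mem_ae_iff, this]
      exact measure_singleton 0
    filter_upwards [h0] with t ht0 htI
    have htIoc : t ∈ Set.Ioc (0:ℝ) 1 := ⟨lt_of_le_of_ne htI.1 (Ne.symm ht0), htI.2⟩
    simpa using hd t htIoc
  rw [setIntegral_congr_set hae]
  have hres : (volume.restrict (Set.Icc (0:ℝ) 1)).restrict (Set.Ioc (αlo i) (αhi i))
      = volume.restrict (Set.Ioc (αlo i) (αhi i)) := by
    rw [Measure.restrict_restrict measurableSet_Ioc]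
    rw [Set.inter_eq_left.2 (hIocsub.trans Set.Ioc_subset_Icc_self)]
  rw [intervalIntegral.integral_of_le hlohi.le]
  show ∫ t in Set.Ioc (αlo i) (αhi i), quantile ν t ∂(volume.restrict (Set.Icc (0:ℝ) 1))
      = ∫ t in Set.Ioc (αlo i) (αhi i), quantile ν t ∂volume
  rw [← hres, Measure.restrict_restrict measurableSet_Ioc,
    Set.inter_eq_left.2 (hIocsub.trans Set.Ioc_subset_Icc_self)]
end

section
/- Let f : ℝ^d → ℝ be L-smooth and ℓ-strongly convex with 0 ≤ ℓ < L. Then for all x, y ∈ ℝ^d: f(x) ≥ f(y) + ⟨∇f(y), x − y⟩ + (1/(2(1 − ℓ/L))) [ (1/L)‖∇f(x) − ∇f(y)‖² + ℓ‖x − y‖² − 2(ℓ/L)⟨∇f(y) − ∇f(x), y − x⟩ ]. -/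
/-! Subtracting `ℓ / 2 * ‖·‖ ^ 2` reduces the claim to the convex case: `g = f - ℓ / 2 * ‖·‖ ^ 2`
is convex, and by the descent lemma its Bregman divergence `D_g x y = g x - g y - ⟪∇g y, x - y⟫`
is at most `(L - ℓ) / 2 * ‖x - y‖ ^ 2`. For such `g`, the three-point identity at the gradient
step `z = x - (∇g x - ∇g y) / (L - ℓ)` combines `D_g z y ≥ 0` with the upper bound on `D_g z x`
into `D_g x y ≥ ‖∇g x - ∇g y‖ ^ 2 / (2 (L - ℓ))`; rewriting this in terms of `f` is the claim. -/

open InnerProductSpace Set AffineMap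
open scoped RealInnerProductSpace

section Bregman

variable {E : Type*} [NormedAddCommGroup E] [InnerProductSpace ℝ E] {g h : E → ℝ} {G H : E → E}

def bregmanDiv (g : E → ℝ) (G : E → E) (x y : E) : ℝ :=
  g x - g y - ⟪G y, x - y⟫

theorem bregmanDiv_sub (x y : E) :
    bregmanDiv (fun z => g z - h z) (fun z => G z - H z) x y =
      bregmanDiv g G x y - bregmanDiv h H x y := by
  simp only [bregmanDiv, inner_sub_left]
  ring

theorem bregmanDiv_half_mul_norm_sq (c : ℝ) (x y : E) :
    bregmanDiv (fun z => c / 2 * ‖z‖ ^ 2) (fun z => c • z) x y = c / 2 * ‖x - y‖ ^ 2 := by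
  simp only [bregmanDiv, norm_sub_sq_real, real_inner_smul_left, inner_sub_right,
    real_inner_self_eq_norm_sq, real_inner_comm x y]
  ring

theorem bregmanDiv_three_point (x y z : E) :
    bregmanDiv g G x y = bregmanDiv g G z y - bregmanDiv g G z x - ⟪G x - G y, z - x⟫ := by
  simp only [bregmanDiv, inner_sub_left, inner_sub_right]
  ring

variable [CompleteSpace E]

theorem HasGradientAt.sub {x G' H' : E} (hg : HasGradientAt g G' x) (hh : HasGradientAt h H' x) :
    HasGradientAt (fun z => g z - h z) (G' - H') x := by
  rw [hasGradientAt_iff_hasFDerivAt, map_sub]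
  exact hg.hasFDerivAt.sub hh.hasFDerivAt

theorem hasGradientAt_half_mul_norm_sq (c : ℝ) (x : E) :
    HasGradientAt (fun z => c / 2 * ‖z‖ ^ 2) (c • x) x := by
  rw [hasGradientAt_iff_hasFDerivAt]
  refine ((hasStrictFDerivAt_norm_sq x).hasFDerivAt.const_mul (c / 2)).congr_fderiv ?_
  ext v
  simp [toDual_apply_apply]
  ring

theorem HasGradientAt.hasDerivAt_comp_lineMap {G' x y : E} {t : ℝ}
    (hg : HasGradientAt g G' (lineMap y x t)) :
    HasDerivAt (fun s => g (lineMap y x s)) ⟪G', x - y⟫ t := by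
  simpa [toDual_apply_apply, Function.comp_def] using
    hg.hasFDerivAt.comp_hasDerivAt t (hasDerivAt_lineMap (a := y) (b := x))

theorem ConvexOn.bregmanDiv_nonneg (hconv : ConvexOn ℝ univ g) {y : E}
    (hg : HasGradientAt g (G y) y) (x : E) : 0 ≤ bregmanDiv g G x y := by
  have hline : ConvexOn ℝ univ (fun t : ℝ => g (lineMap y x t)) := by
    simpa [Function.comp_def] using hconv.comp_affineMap (lineMap y x : ℝ →ᵃ[ℝ] E)
  have hderiv : HasDerivAt (fun t : ℝ => g (lineMap y x t)) ⟪G y, x - y⟫ 0 :=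
    (by simpa using hg : HasGradientAt g (G y) (lineMap y x (0 : ℝ))).hasDerivAt_comp_lineMap
  have hslope := hline.le_slope_of_hasDerivAt (mem_univ 0) (mem_univ 1) one_pos hderiv
  simp only [slope_def_field, lineMap_apply_one, lineMap_apply_zero, sub_zero, div_one] at hslope
  rw [bregmanDiv]
  linarith

theorem bregmanDiv_nonneg_of_monotone_gradient (hg : ∀ z, HasGradientAt g (G z) z)
    (hmono : ∀ a b, 0 ≤ ⟪G a - G b, a - b⟫) (x y : E) : 0 ≤ bregmanDiv g G x y := by
  obtain ⟨c, ⟨hc0, -⟩, hc⟩ := exists_hasDerivAt_eq_slope (fun t => g (lineMap y x t))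
    (fun t => ⟪G (lineMap y x t), x - y⟫) one_pos
    (fun t _ => (hg _).hasDerivAt_comp_lineMap.continuousAt.continuousWithinAt)
    (fun t _ => (hg _).hasDerivAt_comp_lineMap)
  simp only [lineMap_apply_one, lineMap_apply_zero, sub_zero, div_one] at hc
  have hstep : lineMap y x c - y = c • (x - y) := by
    rw [lineMap_apply_module']; abel
  have hmono_c : 0 ≤ c * ⟪G (lineMap y x c) - G y, x - y⟫ := by
    simpa [hstep, real_inner_smul_right] using hmono (lineMap y x c) y
  rw [bregmanDiv, ← hc, ← inner_sub_left]
  exact nonneg_of_mul_nonneg_right hmono_c hc0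

theorem bregmanDiv_le_of_lipschitz_gradient {L : ℝ} (hg : ∀ z, HasGradientAt g (G z) z)
    (hlip : ∀ a b, ‖G a - G b‖ ≤ L * ‖a - b‖) (x y : E) :
    bregmanDiv g G x y ≤ L / 2 * ‖x - y‖ ^ 2 := by
  have hmono : ∀ a b, 0 ≤ ⟪(L • a - G a) - (L • b - G b), a - b⟫ := by
    intro a b
    have hcs : ⟪G a - G b, a - b⟫ ≤ L * ‖a - b‖ ^ 2 := by
      calc ⟪G a - G b, a - b⟫ ≤ ‖G a - G b‖ * ‖a - b‖ := real_inner_le_norm _ _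
        _ ≤ L * ‖a - b‖ * ‖a - b‖ := by gcongr; exact hlip a b
        _ = L * ‖a - b‖ ^ 2 := by ring
    have hexp : ⟪(L • a - G a) - (L • b - G b), a - b⟫ = L * ‖a - b‖ ^ 2 - ⟪G a - G b, a - b⟫ := by
      rw [sub_sub_sub_comm, ← smul_sub, inner_sub_left, real_inner_smul_left,
        real_inner_self_eq_norm_sq]
    linarith
  have hnonneg := bregmanDiv_nonneg_of_monotone_gradient
    (fun z => (hasGradientAt_half_mul_norm_sq L z).sub (hg z)) hmono x y
  rw [bregmanDiv_sub, bregmanDiv_half_mul_norm_sq] at hnonneg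
  linarith

theorem ConvexOn.norm_sub_sq_le_bregmanDiv {M : ℝ} (hM : 0 < M) (hconv : ConvexOn ℝ univ g)
    (hg : ∀ z, HasGradientAt g (G z) z)
    (hupper : ∀ a b, bregmanDiv g G a b ≤ M / 2 * ‖a - b‖ ^ 2) (x y : E) :
    1 / (2 * M) * ‖G x - G y‖ ^ 2 ≤ bregmanDiv g G x y := by
  set z := x - M⁻¹ • (G x - G y)
  have hlower := hconv.bregmanDiv_nonneg (hg y) z
  have hup := hupper z x
  rw [bregmanDiv_three_point x y z]
  simp only [z, sub_sub_cancel_left, norm_neg, norm_smul, inner_neg_right, real_inner_smul_right,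
    real_inner_self_eq_norm_sq, Real.norm_eq_abs, abs_of_pos (inv_pos.2 hM)] at hup ⊢
  have hsq : M / 2 * (M⁻¹ * ‖G x - G y‖) ^ 2 = 1 / (2 * M) * ‖G x - G y‖ ^ 2 := by field_simp
  have hlin : M⁻¹ * ‖G x - G y‖ ^ 2 = 2 * (1 / (2 * M) * ‖G x - G y‖ ^ 2) := by field_simp
  linarith

theorem le_bregmanDiv_of_convexOn_sub_of_lipschitz_gradient {f : E → ℝ} {f' : E → E} {ℓ L : ℝ}
    (hℓL : ℓ < L) (hf : ∀ z, HasGradientAt f (f' z) z)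
    (hsc : ConvexOn ℝ univ (fun z => f z - ℓ / 2 * ‖z‖ ^ 2))
    (hlip : ∀ a b, ‖f' a - f' b‖ ≤ L * ‖a - b‖) (x y : E) :
    ℓ / 2 * ‖x - y‖ ^ 2 + 1 / (2 * (L - ℓ)) * ‖f' x - f' y - ℓ • (x - y)‖ ^ 2 ≤
      bregmanDiv f f' x y := by
  have hg : ∀ z, HasGradientAt (fun z => f z - ℓ / 2 * ‖z‖ ^ 2) (f' z - ℓ • z) z :=
    fun z => (hf z).sub (hasGradientAt_half_mul_norm_sq ℓ z)
  have hshift : ∀ a b, bregmanDiv (fun z => f z - ℓ / 2 * ‖z‖ ^ 2) (fun z => f' z - ℓ • z) a b =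
      bregmanDiv f f' a b - ℓ / 2 * ‖a - b‖ ^ 2 := fun a b => by
    rw [bregmanDiv_sub, bregmanDiv_half_mul_norm_sq]
  have hupper : ∀ a b, bregmanDiv (fun z => f z - ℓ / 2 * ‖z‖ ^ 2) (fun z => f' z - ℓ • z) a b ≤
      (L - ℓ) / 2 * ‖a - b‖ ^ 2 := fun a b => by
    have hdescent := bregmanDiv_le_of_lipschitz_gradient hf hlip a b
    rw [hshift]
    linarith
  have hcoco := hsc.norm_sub_sq_le_bregmanDiv (sub_pos.2 hℓL) hg hupper x y
  rw [hshift, sub_sub_sub_comm, ← smul_sub] at hcoco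
  linarith

end Bregman

theorem stmt_15 {d : ℕ} (f : EuclideanSpace ℝ (Fin d) → ℝ)
    (f' : EuclideanSpace ℝ (Fin d) → EuclideanSpace ℝ (Fin d))
    (ℓ L : ℝ) (hℓ : 0 ≤ ℓ) (hℓL : ℓ < L)
    (hdiff : ∀ x, HasGradientAt f (f' x) x)
    (hsc : ConvexOn ℝ Set.univ (fun x => f x - ℓ / 2 * ‖x‖ ^ 2))
    (hsmooth : ∀ x y, ‖f' x - f' y‖ ≤ L * ‖x - y‖) :
    ∀ x y, f x ≥ f y + inner ℝ (f' y) (x - y)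
      + (1 / (2 * (1 - ℓ / L))) *
        ((1 / L) * ‖f' x - f' y‖ ^ 2 + ℓ * ‖x - y‖ ^ 2
          - 2 * (ℓ / L) * inner ℝ (f' y - f' x) (y - x)) := by
  intro x y
  have hbound := le_bregmanDiv_of_convexOn_sub_of_lipschitz_gradient hℓL hdiff hsc hsmooth x y
  rw [bregmanDiv, norm_sub_sq_real (f' x - f' y), norm_smul, real_inner_smul_right,
    Real.norm_eq_abs, mul_pow, sq_abs] at hbound
  rw [← neg_sub x y, ← neg_sub (f' x) (f' y), inner_neg_neg]
  have hL : L ≠ 0 := (hℓ.trans_lt hℓL).ne'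
  have hLℓ : L - ℓ ≠ 0 := (sub_pos.2 hℓL).ne'
  have hcoef : ∀ a b c : ℝ, 1 / (2 * (1 - ℓ / L)) * (1 / L * a + ℓ * b - 2 * (ℓ / L) * c) =
      ℓ / 2 * b + 1 / (2 * (L - ℓ)) * (a - 2 * ℓ * c + ℓ ^ 2 * b) := fun a b c => by
    field_simp
    ring
  rw [ge_iff_le, hcoef]
  linarith
end
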